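/- arXiv:2005.05204 — 5 statements merged into one kernel-verified Lean document; each statement's English description precedes it below -/
import Mathlib

section
/- Let m ≥ 1 be an integer, φ ∈ ℂ, and 0 < r′ < r. Let ξ : ℂ → ℂ be holomorphic on {z : |z − φ| > r′} and suppose that (z − φ)^{−(m−1)} ξ(z) → 0 as |z| → ∞. Then for every p ∈ ℂ with |p − φ| > r one has (1/(2πi)) ∮_{|z−φ|=r} (p − φ)^{m−1} ξ(z) / ((p − z)(z − φ)^{m−1}) dz = ξ(p). -/
/-!
Put `F z = (p - φ)^(m-1) ξ z / (z - φ)^(m-1)`. It is holomorphic on `r ≤ |z - φ|`, tends to `0`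
at infinity by the growth hypothesis, and `F p = ξ p`; the integrand is `F z / (p - z)`. Cauchy's
formula on the annulus `r < |z - φ| < R` gives `∮_R F z/(z - p) - ∮_r F z/(z - p) = 2πi F(p)`, and
the integral over the outer circle is `o(1)` as `R → ∞` because `F → 0`.
-/

open Complex Filter Metric Set Bornology Topology

variable {E : Type*} [NormedAddCommGroup E] [NormedSpace ℂ E]

theorem circleIntegral_sub_inv_smul_eq_integral_dslope_add [CompleteSpace E] {c w : ℂ} {ρ : ℝ}
    (hρ : 0 ≤ ρ) (hw : w ∉ sphere c ρ) {f : ℂ → E} (hf : ContinuousOn (dslope f w) (sphere c ρ)) :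
    (∮ z in C(c, ρ), (z - w)⁻¹ • f z) =
      (∮ z in C(c, ρ), dslope f w z) + (∮ z in C(c, ρ), (z - w)⁻¹) • f w := by
  have hne : ∀ z ∈ sphere c ρ, z - w ≠ 0 := fun z hz =>
    sub_ne_zero.2 (ne_of_mem_of_not_mem hz hw)
  have hinv : ContinuousOn (fun z : ℂ => (z - w)⁻¹) (sphere c ρ) :=
    (continuousOn_id.sub continuousOn_const).inv₀ hne
  calc (∮ z in C(c, ρ), (z - w)⁻¹ • f z)
      = ∮ z in C(c, ρ), (dslope f w z + (z - w)⁻¹ • f w) := by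
        refine circleIntegral.integral_congr hρ fun z hz => ?_
        rw [← inv_smul_smul₀ (hne z hz) (dslope f w z), sub_smul_dslope, ← smul_add,
          sub_add_cancel]
    _ = _ := by
        rw [circleIntegral.integral_add (hf.circleIntegrable hρ)
          (ContinuousOn.circleIntegrable (f := fun z => (z - w)⁻¹ • f w) hρ
            (hinv.smul continuousOn_const)),
          circleIntegral.integral_smul_const]

theorem circleIntegral_sub_inv_of_notMem_closedBall {c w : ℂ} {r : ℝ} (hr : 0 ≤ r)
    (hw : w ∉ closedBall c r) : (∮ z in C(c, r), (z - w)⁻¹) = 0 := by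
  have hne : ∀ z ∈ closedBall c r, z - w ≠ 0 := fun z hz =>
    sub_ne_zero.2 (ne_of_mem_of_not_mem hz hw)
  exact Complex.circleIntegral_eq_zero_of_differentiable_on_off_countable hr countable_empty
    ((continuousOn_id.sub continuousOn_const).inv₀ hne)
    fun z hz => (differentiableAt_id.sub_const w).inv (hne z (ball_subset_closedBall hz.1))

theorem circleIntegral_sub_inv_smul_of_differentiable_on_annulus [CompleteSpace E] {c w : ℂ}
    {r R : ℝ} (h0 : 0 < r) (hw : w ∈ ball c R \ closedBall c r) {f : ℂ → E}
    (hf : ∀ z ∈ closedBall c R \ ball c r, DifferentiableAt ℂ f z) :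
    (∮ z in C(c, R), (z - w)⁻¹ • f z) =
      (∮ z in C(c, r), (z - w)⁻¹ • f z) + (2 * Real.pi * I) • f w := by
  have hwr : r < dist w c := not_le.1 hw.2
  have hrR : r ≤ R := (hwr.trans (mem_ball.1 hw.1)).le
  have hinterior : ball c R \ closedBall c r ⊆ closedBall c R \ ball c r :=
    sdiff_subset_sdiff ball_subset_closedBall ball_subset_closedBall
  have hsphere : ∀ ρ, r ≤ ρ → ρ ≤ R → sphere c ρ ⊆ closedBall c R \ ball c r :=
    fun ρ h₁ h₂ z hz => ⟨(mem_sphere.1 hz).trans_le h₂,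
      fun h => (mem_ball.1 h).not_ge ((mem_sphere.1 hz).symm ▸ h₁)⟩
  -- `dslope f w` is holomorphic on the whole annulus, and `(z - w)⁻¹ • f z` differs from it by
  -- `(z - w)⁻¹ • f w`, whose integral is `2πi • f w` on the outer circle and `0` on the inner one.
  have hdslope : ∀ z ∈ closedBall c R \ ball c r, DifferentiableAt ℂ (dslope f w) z := by
    intro z hz
    rcases eq_or_ne z w with rfl | hzw
    · have hU : (ball c R \ closedBall c r) ∈ 𝓝 z :=
        (isOpen_ball.sdiff isClosed_closedBall).mem_nhds hw
      exact ((Complex.differentiableOn_dslope hU).2 fun u hu =>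
        (hf u (hinterior hu)).differentiableWithinAt).differentiableAt hU
    · exact (differentiableAt_dslope_of_ne hzw).2 (hf z hz)
  have hcont : ContinuousOn (dslope f w) (closedBall c R \ ball c r) :=
    fun z hz => (hdslope z hz).continuousAt.continuousWithinAt
  rw [circleIntegral_sub_inv_smul_eq_integral_dslope_add (h0.le.trans hrR)
      (fun h => (mem_ball.1 hw.1).ne (mem_sphere.1 h)) (hcont.mono (hsphere R hrR le_rfl)),
    circleIntegral_sub_inv_smul_eq_integral_dslope_add h0.le
      (fun h => hwr.ne' (mem_sphere.1 h)) (hcont.mono (hsphere r le_rfl hrR)),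
    circleIntegral_eq_of_differentiable_on_annulus_off_countable h0 hrR countable_empty hcont
      fun z hz => hdslope z (hinterior hz.1),
    circleIntegral.integral_sub_inv_of_mem_ball hw.1,
    circleIntegral_sub_inv_of_notMem_closedBall h0.le hw.2, zero_smul, add_zero]

theorem tendsto_circleIntegral_atTop_of_tendsto_sub_smul {c : ℂ} {h : ℂ → E}
    (hh : Tendsto (fun z => (z - c) • h z) (cobounded ℂ) (𝓝 0)) :
    Tendsto (fun R : ℝ => ∮ z in C(c, R), h z) atTop (𝓝 0) := by
  refine nhds_basis_closedBall.tendsto_right_iff.2 fun ε hε => ?_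
  obtain ⟨M, hM⟩ := (hasBasis_cobounded_norm.tendsto_iff Metric.nhds_basis_closedBall).1 hh
    (ε / (2 * Real.pi)) (by positivity)
  filter_upwards [eventually_gt_atTop 0, eventually_ge_atTop (M + ‖c‖)] with R hR₀ hRM
  have hbound : ∀ z ∈ sphere c R, ‖h z‖ ≤ ε / (2 * Real.pi) / R := by
    intro z hz
    have hzc : ‖z - c‖ = R := by rwa [← dist_eq_norm, ← mem_sphere]
    have hz : M ≤ ‖z‖ := by linarith [norm_sub_le z c]
    have := mem_closedBall_zero_iff.1 (hM.2 z hz)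
    rw [norm_smul, hzc] at this
    rwa [le_div_iff₀ hR₀, mul_comm]
  rw [mem_closedBall_zero_iff]
  calc ‖∮ z in C(c, R), h z‖ ≤ 2 * Real.pi * R * (ε / (2 * Real.pi) / R) :=
        circleIntegral.norm_integral_le_of_norm_le_const hR₀.le hbound
    _ = ε := by field_simp

theorem tendsto_sub_mul_sub_inv_cobounded (c w : ℂ) :
    Tendsto (fun z => (z - c) * (z - w)⁻¹) (cobounded ℂ) (𝓝 1) := by
  have hinv : Tendsto (fun z => (z - w)⁻¹) (cobounded ℂ) (𝓝 0) :=
    tendsto_inv₀_cobounded.comp (tendsto_sub_const_cobounded w)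
  have hlim : Tendsto (fun z => 1 + (w - c) * (z - w)⁻¹) (cobounded ℂ) (𝓝 1) := by
    simpa using tendsto_const_nhds.add (hinv.const_mul (w - c))
  refine hlim.congr' ?_
  filter_upwards [(tendsto_sub_const_cobounded w).eventually_ne_cobounded 0] with z hz
  field_simp
  ring

theorem circleIntegral_inv_sub_smul_of_differentiable_on_exterior [CompleteSpace E] {c w : ℂ}
    {r : ℝ} (h0 : 0 < r) (hw : r < ‖w - c‖) {f : ℂ → E}
    (hf : ∀ z, r ≤ ‖z - c‖ → DifferentiableAt ℂ f z)
    (hlim : Tendsto f (cobounded ℂ) (𝓝 0)) :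
    (∮ z in C(c, r), (w - z)⁻¹ • f z) = (2 * Real.pi * I) • f w := by
  have hannulus : ∀ᶠ R in atTop, (∮ z in C(c, r), (z - w)⁻¹ • f z) =
      (∮ z in C(c, R), (z - w)⁻¹ • f z) - (2 * Real.pi * I) • f w := by
    filter_upwards [eventually_gt_atTop ‖w - c‖] with R hR
    rw [circleIntegral_sub_inv_smul_of_differentiable_on_annulus h0
        ⟨mem_ball_iff_norm.2 hR, fun h => hw.not_ge (mem_closedBall_iff_norm.1 h)⟩
        fun z hz => hf z (le_of_not_gt fun h => hz.2 (mem_ball_iff_norm.2 h)),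
      add_sub_cancel_right]
  have hbig : Tendsto (fun R : ℝ => ∮ z in C(c, R), (z - w)⁻¹ • f z) atTop (𝓝 0) := by
    refine tendsto_circleIntegral_atTop_of_tendsto_sub_smul ?_
    simpa [smul_smul] using (tendsto_sub_mul_sub_inv_cobounded c w).smul hlim
  have hsmall := (hbig.sub_const ((2 * Real.pi * I) • f w)).congr' (EventuallyEq.symm hannulus)
  calc (∮ z in C(c, r), (w - z)⁻¹ • f z) = ∮ z in C(c, r), (-1 : ℂ) • ((z - w)⁻¹ • f z) := by
        simp only [smul_smul, ← neg_sub w, inv_neg, neg_one_mul, neg_neg]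
    _ = (2 * Real.pi * I) • f w := by
        rw [circleIntegral.integral_smul, tendsto_nhds_unique tendsto_const_nhds hsmall, zero_sub,
          neg_one_smul, neg_neg]

/-- Reproducing identity `⟨da(p), ξ⟩ = ξ(p)`:
for `m ≥ 1`, `φ ∈ ℂ`, `0 < r' < r`, `ξ` holomorphic on `{|z-φ| > r'}` with
`(z-φ)^{-(m-1)} ξ(z) → 0` as `|z| → ∞`, and any `p` with `|p-φ| > r`,
`(1/(2πi)) ∮_{|z-φ|=r} (p-φ)^{m-1} ξ(z) / ((p-z)(z-φ)^{m-1}) dz = ξ(p)`. -/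
theorem stmt0 (m : ℕ) (hm : 1 ≤ m) (φ : ℂ) (r' r : ℝ) (hr' : 0 < r') (hr'r : r' < r)
    (ξ : ℂ → ℂ)
    (hξ : DifferentiableOn ℂ ξ {z : ℂ | r' < ‖z - φ‖})
    (hdecay : Tendsto (fun z : ℂ => (z - φ) ^ (-((m : ℤ) - 1)) * ξ z)
      (comap (fun z : ℂ => ‖z‖) atTop) (nhds 0)) :
    ∀ p : ℂ, r < ‖p - φ‖ →
      (2 * Real.pi * Complex.I)⁻¹ *
        (∮ z in C(φ, r), (p - φ) ^ (m - 1) * ξ z / ((p - z) * (z - φ) ^ (m - 1)))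
        = ξ p := by
  intro p hp
  have hzpow : ∀ u : ℂ, u ^ (-((m : ℤ) - 1)) = (u ^ (m - 1))⁻¹ := fun u => by
    rw [← Nat.cast_one, ← Nat.cast_sub hm, zpow_neg, zpow_natCast]
  simp only [hzpow, comap_norm_atTop] at hdecay
  set F : ℂ → ℂ := fun z => (p - φ) ^ (m - 1) * (((z - φ) ^ (m - 1))⁻¹ * ξ z)
  have hne : ∀ z, r ≤ ‖z - φ‖ → z - φ ≠ 0 := fun z hz =>
    norm_ne_zero_iff.1 (hr'.trans (hr'r.trans_le hz)).ne'
  have hF : ∀ z, r ≤ ‖z - φ‖ → DifferentiableAt ℂ F z := fun z hz => by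
    have hξz : DifferentiableAt ℂ ξ z :=
      hξ.differentiableAt ((isOpen_lt continuous_const (by fun_prop)).mem_nhds (hr'r.trans_le hz))
    exact (((differentiableAt_id.sub_const φ).pow _).inv (pow_ne_zero _ (hne z hz))).mul hξz
      |>.const_mul _
  have hFlim : Tendsto F (cobounded ℂ) (𝓝 0) := by
    have := hdecay.const_mul ((p - φ) ^ (m - 1))
    rwa [mul_zero] at this
  have hFp : F p = ξ p := mul_inv_cancel_left₀ (pow_ne_zero _ (hne p hp.le)) (ξ p)
  have hintegrand : (fun z => (p - φ) ^ (m - 1) * ξ z / ((p - z) * (z - φ) ^ (m - 1))) =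
      fun z => (p - z)⁻¹ • F z := by
    ext z
    simp only [F, smul_eq_mul, div_eq_mul_inv, mul_inv]
    ring
  rw [hintegrand, circleIntegral_inv_sub_smul_of_differentiable_on_exterior (hr'.trans hr'r) hp hF
    hFlim, smul_eq_mul, inv_mul_cancel_left₀ (by simp [Real.pi_ne_zero, I_ne_zero]), hFp]
end

section
/- Let 0 < r < ρ < R. Suppose g is holomorphic on {z : |z| < R}, h is holomorphic on {z : |z| > r}, and h(z) → 0 as |z| → ∞. Then for every z₁ with |z₁| > ρ one has (1/(2πi)) ∮_{|z₂|=ρ} (g′(z₂) + h′(z₂)) · Log(1 − z₂/z₁) dz₂ = h(z₁), where Log is the principal branch of the complex logarithm. -/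
/-!
Integrating by parts with `d/dz log (1 - z / z₁) = 1 / (z - z₁)` turns the integral into
`-∮ (g z + h z) / (z - z₁)`. The `g`-part vanishes by Cauchy's theorem, as `z₁` lies outside the
disc. For the `h`-part, the Cauchy formula on the annulus `ρ ≤ |z| ≤ S` with `S > |z₁|` shows that
`∮_{|z|=ρ} h z / (z - z₁) + 2πi h(z₁)` equals `∮_{|z|=S} h z / (z - z₁)`, which tends to `0` as
`S → ∞` because `h` vanishes at infinity.
-/

open Complex Filter Metric Set Real Topology

theorem circleIntegral_deriv_mul_eq_neg_mul_deriv {F F' φ φ' : ℂ → ℂ} {c : ℂ} {R : ℝ}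
    (hR : 0 ≤ R) (hF : ∀ z ∈ sphere c R, HasDerivAt F (F' z) z)
    (hφ : ∀ z ∈ sphere c R, HasDerivAt φ (φ' z) z)
    (hF' : ContinuousOn F' (sphere c R)) (hφ' : ContinuousOn φ' (sphere c R)) :
    (∮ z in C(c, R), F' z * φ z) = -∮ z in C(c, R), F z * φ' z := by
  have hFc : ContinuousOn F (sphere c R) := fun z hz => (hF z hz).continuousAt.continuousWithinAt
  have hφc : ContinuousOn φ (sphere c R) := fun z hz => (hφ z hz).continuousAt.continuousWithinAt
  have hzero : (∮ z in C(c, R), F' z * φ z + F z * φ' z) = 0 :=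
    circleIntegral.integral_eq_zero_of_hasDerivWithinAt hR fun z hz =>
      ((hF z hz).mul (hφ z hz)).hasDerivWithinAt
  rw [circleIntegral.integral_add ((hF'.fun_mul hφc).circleIntegrable hR)
    ((hFc.fun_mul hφ').circleIntegrable hR)] at hzero
  exact eq_neg_of_add_eq_zero_left hzero

theorem hasDerivAt_log_one_sub_div {z w : ℂ} (hz : ‖z‖ < ‖w‖) :
    HasDerivAt (fun z => log (1 - z / w)) (1 / (z - w)) z := by
  have hw : w ≠ 0 := norm_pos_iff.1 ((norm_nonneg z).trans_lt hz)
  have hslit : 1 - z / w ∈ slitPlane := by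
    refine mem_slitPlane_iff.2 (Or.inl ?_)
    have : (z / w).re < 1 :=
      (re_le_norm _).trans_lt (by rwa [norm_div, div_lt_one (norm_pos_iff.2 hw)])
    simpa using this
  refine ((hasDerivAt_log hslit).comp z
    (((hasDerivAt_id z).div_const w).const_sub 1)).congr_deriv ?_
  have hwz : w - z ≠ 0 := sub_ne_zero.2 fun h => hz.ne (h ▸ rfl)
  have hzw : z - w ≠ 0 := sub_ne_zero.2 fun h => hz.ne (h ▸ rfl)
  rw [one_sub_div hw]
  field_simp
  ring

theorem circleIntegral_div_sub_eq_zero {f : ℂ → ℂ} {U : Set ℂ} {c w : ℂ} {R : ℝ} (hR : 0 ≤ R)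
    (hf : DifferentiableOn ℂ f U) (hU : closedBall c R ⊆ U) (hw : w ∉ closedBall c R) :
    (∮ z in C(c, R), f z / (z - w)) = 0 :=
  DiffContOnCl.circleIntegral_eq_zero hR <|
    ((hf.mono sdiff_subset).div (differentiableOn_id.sub_const w) fun _ hz =>
      sub_ne_zero.2 hz.2).diffContOnCl_ball (subset_sdiff_singleton hU hw)

theorem circleIntegral_div_sub_sub_circleIntegral_div_sub {f : ℂ → ℂ} {U : Set ℂ} {c w : ℂ}
    {ρ S : ℝ} (hρ : 0 < ρ) (hU : IsOpen U) (hf : DifferentiableOn ℂ f U)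
    (hann : closedBall c S \ ball c ρ ⊆ U) (hw : w ∈ ball c S \ closedBall c ρ) :
    (∮ z in C(c, S), f z / (z - w)) - (∮ z in C(c, ρ), f z / (z - w)) = 2 * π * I * f w := by
  have hopen : ball c S \ closedBall c ρ ⊆ U := fun z hz =>
    hann ⟨ball_subset_closedBall hz.1, fun h => hz.2 (ball_subset_closedBall h)⟩
  have hρS : ρ ≤ S := by
    have := hw.2; simp only [mem_closedBall, not_le] at this
    exact (this.trans (mem_ball.1 hw.1)).le
  have hfw : DifferentiableAt ℂ f w := hf.differentiableAt (hU.mem_nhds (hopen hw))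
  -- `dslope f w` removes the pole at `w`, so Cauchy's theorem on the annulus applies to it
  set G := dslope f w
  have hG : ContinuousOn G U :=
    (continuousOn_dslope (hU.mem_nhds (hopen hw))).2 ⟨hf.continuousOn, hfw⟩
  have hG_annulus : (∮ z in C(c, S), G z) = ∮ z in C(c, ρ), G z :=
    circleIntegral_eq_of_differentiable_on_annulus_off_countable hρ hρS (countable_singleton w)
      (hG.mono hann) fun z hz =>
        (differentiableAt_dslope_of_ne hz.2).2 (hf.differentiableAt (hU.mem_nhds (hopen hz.1)))
  have hsplit : ∀ s, ρ ≤ s → s ≤ S → w ∉ sphere c s →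
      (∮ z in C(c, s), f z / (z - w)) = (∮ z in C(c, s), G z) + ∮ z in C(c, s), f w / (z - w) := by
    intro s hρs hsS hws
    have hsU : sphere c s ⊆ U := fun z hz => hann
      ⟨sphere_subset_closedBall.trans (closedBall_subset_closedBall hsS) hz, by
        simp only [mem_ball, not_lt, mem_sphere.1 hz, hρs]⟩
    have hne : ∀ z ∈ sphere c s, z - w ≠ 0 := fun z hz => sub_ne_zero.2 fun h => hws (h ▸ hz)
    rw [← circleIntegral.integral_add (g := fun z => f w / (z - w))
      ((hG.mono hsU).circleIntegrable (hρ.le.trans hρs))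
      ((continuousOn_const.div (continuousOn_id.sub continuousOn_const) hne).circleIntegrable
        (hρ.le.trans hρs))]
    refine circleIntegral.integral_congr (hρ.le.trans hρs) fun z hz => ?_
    have hzw : z ≠ w := sub_ne_zero.1 (hne z hz)
    simp only [G, dslope_of_ne f hzw, slope_def_field]
    field_simp [hne z hz]
    ring
  rw [hsplit S hρS le_rfl fun h => (mem_ball.1 hw.1).ne (mem_sphere.1 h),
    hsplit ρ le_rfl hρS fun h => hw.2 (sphere_subset_closedBall h), hG_annulus,
    circleIntegral_div_sub_eq_zero hρ.le (differentiableOn_const (f w)) (subset_univ _) hw.2,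
    circleIntegral_div_sub_of_differentiable_on_off_countable countable_empty hw.1
      continuousOn_const fun _ _ => differentiableAt_const _]
  ring

theorem tendsto_circleIntegral_div_sub_atTop {f : ℂ → ℂ}
    (hf : Tendsto f (comap (fun z : ℂ => ‖z‖) atTop) (𝓝 0)) (w : ℂ) :
    Tendsto (fun S : ℝ => ∮ z in C(0, S), f z / (z - w)) atTop (𝓝 0) := by
  rw [Metric.tendsto_nhds]
  intro ε hε
  set δ := ε / (8 * π) with hδ_def
  have hδ : 0 < δ := by positivity
  obtain ⟨M, hM⟩ :=
    eventually_atTop.1 (eventually_comap.1 (hf.eventually (Metric.ball_mem_nhds 0 hδ)))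
  filter_upwards [eventually_ge_atTop M, eventually_ge_atTop (2 * ‖w‖), eventually_gt_atTop 0]
    with S hSM hSw hS
  -- `‖z - w‖ ≥ S / 2` on the circle, which absorbs its length `2πS`
  have hbound : ∀ z ∈ sphere (0 : ℂ) S, ‖f z / (z - w)‖ ≤ δ / (S / 2) := by
    intro z hz
    rw [mem_sphere_zero_iff_norm] at hz
    have hzw : S / 2 ≤ ‖z - w‖ := by linarith [norm_sub_norm_le z w]
    rw [norm_div]
    exact div_le_div₀ hδ.le (mem_ball_zero_iff.1 (hM S hSM z hz)).le (by positivity) hzw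
  calc dist (∮ z in C(0, S), f z / (z - w)) 0
      ≤ 2 * π * S * (δ / (S / 2)) := by
        rw [dist_zero_right]; exact circleIntegral.norm_integral_le_of_norm_le_const hS.le hbound
    _ = ε / 2 := by rw [hδ_def]; field_simp; ring
    _ < ε := half_lt_self hε

theorem circleIntegral_div_sub_eq_neg_of_tendsto_zero {f : ℂ → ℂ} {r ρ : ℝ} {w : ℂ}
    (hρ : 0 < ρ) (hrρ : r < ρ) (hf : DifferentiableOn ℂ f {z | r < ‖z‖})
    (hlim : Tendsto f (comap (fun z : ℂ => ‖z‖) atTop) (𝓝 0)) (hw : ρ < ‖w‖) :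
    (∮ z in C(0, ρ), f z / (z - w)) = -(2 * π * I * f w) := by
  have hconst : ∀ᶠ S in atTop,
      (∮ z in C(0, ρ), f z / (z - w)) + 2 * π * I * f w = ∮ z in C(0, S), f z / (z - w) := by
    filter_upwards [eventually_gt_atTop ‖w‖] with S hS
    refine (sub_eq_iff_eq_add'.1 (circleIntegral_div_sub_sub_circleIntegral_div_sub (c := 0) hρ
      (isOpen_lt continuous_const continuous_norm) hf (fun z hz => ?_) ?_)).symm
    · have := hz.2; simp only [mem_ball_zero_iff, not_lt] at this
      exact hrρ.trans_le this
    · simpa [hS] using hw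
  have := tendsto_nhds_unique (tendsto_const_nhds.congr' hconst)
    (tendsto_circleIntegral_div_sub_atTop hlim w)
  linear_combination this

/-- For `f = g + h` with `g` holomorphic on `{|z| < R}`, `h` holomorphic
on `{|z| > r}` vanishing at `∞`, `0 < r < ρ < R`, and any `z₁` with `|z₁| > ρ`:
`(1/(2πi)) ∮_{|z₂|=ρ} (g'(z₂)+h'(z₂)) Log(1 - z₂/z₁) dz₂ = h(z₁)`. -/
theorem stmt5 (r ρ R : ℝ) (hr : 0 < r) (hrρ : r < ρ) (hρR : ρ < R)
    (g h : ℂ → ℂ)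
    (hg : DifferentiableOn ℂ g {z : ℂ | ‖z‖ < R})
    (hh : DifferentiableOn ℂ h {z : ℂ | r < ‖z‖})
    (hlim : Tendsto h (comap (fun z : ℂ => ‖z‖) atTop) (nhds 0)) :
    ∀ z₁ : ℂ, ρ < ‖z₁‖ →
      (2 * Real.pi * Complex.I)⁻¹ *
        (∮ z₂ in C(0, ρ), (deriv g z₂ + deriv h z₂) * Complex.log (1 - z₂ / z₁))
        = h z₁ := by
  intro z₁ hz₁
  have hρ : 0 < ρ := hr.trans hrρ
  have hgU : IsOpen {z : ℂ | ‖z‖ < R} := isOpen_lt continuous_norm continuous_const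
  have hhU : IsOpen {z : ℂ | r < ‖z‖} := isOpen_lt continuous_const continuous_norm
  have hsg : sphere (0 : ℂ) ρ ⊆ {z | ‖z‖ < R} := fun z hz =>
    (mem_sphere_zero_iff_norm.1 hz).le.trans_lt hρR
  have hsh : sphere (0 : ℂ) ρ ⊆ {z | r < ‖z‖} := fun z hz =>
    hrρ.trans_le (mem_sphere_zero_iff_norm.1 hz).ge
  have hz₁ne : ∀ z ∈ sphere (0 : ℂ) ρ, z - z₁ ≠ 0 := fun z hz =>
    sub_ne_zero.2 (ne_of_apply_ne norm (by rw [mem_sphere_zero_iff_norm.1 hz]; exact hz₁.ne))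
  have hint : ∀ F : ℂ → ℂ, ContinuousOn F (sphere 0 ρ) →
      CircleIntegrable (fun z => F z / (z - z₁)) 0 ρ := fun F hF =>
    (hF.div (continuousOn_id.sub continuousOn_const) hz₁ne).circleIntegrable hρ.le
  have hparts := circleIntegral_deriv_mul_eq_neg_mul_deriv hρ.le (F := g + h)
    (fun z hz => (hg.differentiableAt (hgU.mem_nhds (hsg hz))).hasDerivAt.add
      (hh.differentiableAt (hhU.mem_nhds (hsh hz))).hasDerivAt)
    (fun z hz => hasDerivAt_log_one_sub_div (mem_sphere_zero_iff_norm.1 hz ▸ hz₁))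
    (((hg.deriv hgU).continuousOn.mono hsg).add ((hh.deriv hhU).continuousOn.mono hsh))
    (continuousOn_const.div (continuousOn_id.sub continuousOn_const) hz₁ne)
  simp only [Pi.add_apply, add_div, mul_one_div] at hparts
  rw [hparts, circleIntegral.integral_add (hint g (hg.continuousOn.mono hsg))
      (hint h (hh.continuousOn.mono hsh)),
    circleIntegral_div_sub_eq_zero hρ.le hg
      (fun z hz => mem_ball_zero_iff.1 (closedBall_subset_ball hρR hz)) ?_,
    circleIntegral_div_sub_eq_neg_of_tendsto_zero hρ hrρ hh hlim hz₁]
  · rw [zero_add, neg_neg, ← mul_assoc, inv_mul_cancel₀ two_pi_I_ne_zero, one_mul]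
  · simpa using hz₁
end

section
/- Fix integers m, n ≥ 1 and let ℓ ∈ ℂ[u, u⁻¹] be a Laurent polynomial of the form ℓ = uᵐ + Σ_{i=−n}^{m−1} cᵢuⁱ with c₋ₙ ≠ 0, and let χ ∈ ℂ((u⁻¹)) be the unique series with leading term u such that χᵐ = ℓ. Then for all integers 1 ≤ j₁, j₂ ≤ m−1 one has −res_∞ [ (ℓ′χ^{−j₁})₊ · (ℓ′χ^{−j₂})₊ / ℓ′ ] dz = m·δ_{m, j₁+j₂}. -/
/-!
Write `ℓ′ = (χᵐ)′`. Since `d/du` is a derivation, `ℓ′χ^{-k} = m χ^{m-k-1} χ′`, which for `k ≠ m`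
is the exact differential `m/(m-k) · (χ^{m-k})′` and so has no residue, while for `k = m` it is
`m χ′/χ`, whose residue is `m` because `χ` has a simple pole at `∞`. In particular
`ℓ′χ^{-j}` has no `u⁻¹` term for `1 ≤ j ≤ m-1`, so it differs from its polynomial part by
`O(u⁻²)`; as `χ^{-j}` and `(ℓ′χ^{-j})₊/ℓ′` are `O(1)`, replacing both truncations by the full
series changes the integrand only by `O(u⁻²)`, and the residue is that of `ℓ′χ^{-(j₁+j₂)}`.
-/

noncomputable section

open HahnSeries

/-- Formal Laurent series over `ℂ`.  Throughout this file the Hahn-series variable is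
`t = u⁻¹`, so `LS` models the field `ℂ((u⁻¹))`: the coefficient of `uⁱ` is the Hahn
coefficient at index `-i`. -/
abbrev LS : Type := LaurentSeries ℂ

/-- Termwise derivative with respect to the Hahn-series variable `t`. -/
def Dt (f : LS) : LS := LaurentSeries.derivative ℂ f

/-- Truncation keeping the coefficients with (Hahn) index satisfying `P`. -/
def truncP (P : ℤ → Prop) [DecidablePred P] (f : LS) : LS :=
  ⟨fun j => if P j then f.coeff j else 0, by
    refine f.isPWO_support'.mono ?_
    intro j hj
    have hj' : (if P j then f.coeff j else 0) ≠ 0 := hj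
    by_cases h : P j
    · simpa [h] using hj'
    · simp [h] at hj'⟩

/-- `f₊`: the part of `f ∈ ℂ((u⁻¹))` with nonnegative powers of `u`
(Hahn indices `j ≤ 0` in the `t = u⁻¹` representation). -/
def uPos (f : LS) : LS := truncP (fun j => j ≤ 0) f

/-- The derivative `df/du` in the `t = u⁻¹` representation: `df/du = -t² · df/dt`. -/
def Du (f : LS) : LS := -(single (2 : ℤ) 1 * Dt f)

/-- `res_∞ f dz`: minus the coefficient of `u⁻¹`, i.e. minus the Hahn coefficient
at index `1` in the `t = u⁻¹` representation. -/
def resInf (f : LS) : ℂ := -(f.coeff 1)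

/-- The Laurent polynomial `ℓ = uᵐ + Σ_{i=−n}^{m−1} cᵢuⁱ`, in the `t = u⁻¹`
representation. -/
def ellInv (m n : ℕ) (c : ℤ → ℂ) : LS :=
  single (-(m : ℤ)) 1 + ∑ i ∈ Finset.Icc (-(n : ℤ)) ((m : ℤ) - 1), single (-i) (c i)

namespace LaurentSeries

variable {R : Type*} [NonAssocRing R]

theorem support_zsmul_coeff_subset (f : R⸨X⸩) :
    (Function.support fun j : ℤ => j • f.coeff j) ⊆ f.support := fun j hj => by
  contrapose! hj
  simp [Function.notMem_support.mp hj]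

def eulerOp (f : R⸨X⸩) : R⸨X⸩ :=
  ⟨fun j => j • f.coeff j, f.isPWO_support.mono (support_zsmul_coeff_subset f)⟩

@[simp]
theorem coeff_eulerOp (f : R⸨X⸩) (j : ℤ) : (eulerOp f).coeff j = j • f.coeff j :=
  rfl

theorem support_eulerOp_subset (f : R⸨X⸩) : (eulerOp f).support ⊆ f.support :=
  support_zsmul_coeff_subset f

theorem eulerOp_add (f g : R⸨X⸩) : eulerOp (f + g) = eulerOp f + eulerOp g := by
  ext j
  simp [smul_add]

theorem eulerOp_one : eulerOp (1 : R⸨X⸩) = 0 := by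
  ext j
  simp +contextual [coeff_one]

theorem eulerOp_mul (f g : R⸨X⸩) : eulerOp (f * g) = f * eulerOp g + eulerOp f * g := by
  ext j
  rw [coeff_add, coeff_eulerOp, coeff_mul,
    coeff_mul_right' g.isPWO_support (support_eulerOp_subset g),
    coeff_mul_left' f.isPWO_support (support_eulerOp_subset f), ← Finset.sum_add_distrib,
    Finset.smul_sum]
  refine Finset.sum_congr rfl fun ⟨a, b⟩ hab => ?_
  rw [← (Finset.mem_antidiagonal.mp hab).2.2, coeff_eulerOp, coeff_eulerOp, add_smul,
    smul_mul_assoc, mul_smul_comm, add_comm]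

end LaurentSeries

namespace HahnSeries

theorem coeff_mul_of_le_orderTop {Γ R : Type*} [AddCommMonoid Γ] [LinearOrder Γ]
    [IsOrderedCancelAddMonoid Γ] [NonUnitalNonAssocSemiring R] {f g : HahnSeries Γ R} {a b : Γ}
    (hf : a ≤ f.orderTop) (hg : b ≤ g.orderTop) :
    (f * g).coeff (a + b) = f.coeff a * g.coeff b := by
  rw [coeff_mul]
  refine Finset.sum_eq_single (a, b) (fun ⟨i, j⟩ hij hne => ?_) fun hab => ?_
  · obtain ⟨hi, hj, hsum⟩ := Finset.mem_antidiagonal.mp hij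
    have hai : a ≤ i := WithTop.coe_le_coe.mp (hf.trans (orderTop_le_of_coeff_ne_zero hi))
    have hbj : b ≤ j := WithTop.coe_le_coe.mp (hg.trans (orderTop_le_of_coeff_ne_zero hj))
    obtain ⟨rfl, rfl⟩ := (add_eq_add_iff_eq_and_eq hai hbj).mp hsum.symm
    exact absurd rfl hne
  · by_contra h
    exact hab (Finset.mem_antidiagonal.mpr ⟨left_ne_zero_of_mul h, right_ne_zero_of_mul h, rfl⟩)

theorem orderTop_inv {Γ K : Type*} [AddCommGroup Γ] [LinearOrder Γ] [IsOrderedAddMonoid Γ]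
    [Field K] (x : HahnSeries Γ K) : x⁻¹.orderTop = -x.orderTop := by
  rcases eq_or_ne x 0 with rfl | hx
  · simp
  have h := orderTop_mul x⁻¹ x
  rw [inv_mul_cancel₀ hx, orderTop_one] at h
  rw [← LinearOrderedAddCommGroupWithTop.add_neg_cancel_right_of_ne_top (orderTop_ne_top.2 hx)
    x⁻¹.orderTop, ← h, zero_add]

end HahnSeries

theorem coeff_Du_add_one (f : LS) (j : ℤ) : (Du f).coeff (j + 1) = -(j • f.coeff j) := by
  rw [Du, coeff_neg, show j + 1 = (j - 1) + 2 by ring, coeff_single_mul_add, one_mul, Dt,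
    LaurentSeries.derivative_apply, LaurentSeries.hasseDeriv_coeff, Ring.choose_one_right]
  push_cast
  rw [sub_add_cancel]

theorem coeff_one_Du (f : LS) : (Du f).coeff 1 = 0 := by
  simpa using coeff_Du_add_one f 0

theorem add_one_le_orderTop_Du (f : LS) : f.orderTop + 1 ≤ (Du f).orderTop := by
  refine le_orderTop_iff_forall.mpr fun j hj => ?_
  obtain ⟨i, rfl⟩ : ∃ i, j = i + 1 := ⟨j - 1, by ring⟩
  rw [WithTop.coe_add, WithTop.coe_one, add_lt_add_iff_left_of_ne_top WithTop.one_ne_top] at hj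
  rw [coeff_Du_add_one, coeff_eq_zero_of_lt_orderTop hj, smul_zero, neg_zero]

theorem Du_eq_neg_single_mul_eulerOp (f : LS) :
    Du f = -(single 1 1 * LaurentSeries.eulerOp f) := by
  ext j
  obtain ⟨i, rfl⟩ : ∃ i, j = i + 1 := ⟨j - 1, by ring⟩
  rw [coeff_Du_add_one, coeff_neg, coeff_single_mul_add, one_mul, LaurentSeries.coeff_eulerOp]

def Du.toDerivation : Derivation ℂ LS LS where
  toFun := Du
  map_add' f g := by simp only [Du_eq_neg_single_mul_eulerOp, LaurentSeries.eulerOp_add]; ring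
  map_smul' c f := by
    ext j
    obtain ⟨i, rfl⟩ : ∃ i, j = i + 1 := ⟨j - 1, by ring⟩
    simp [coeff_Du_add_one, Algebra.smul_def, HahnSeries.algebraMap_apply', ofPowerSeries_C,
      mul_left_comm]
  map_one_eq_zero' := by
    change Du 1 = 0
    rw [Du_eq_neg_single_mul_eulerOp, LaurentSeries.eulerOp_one, mul_zero, neg_zero]
  leibniz' f g := by
    change Du (f * g) = f * Du g + g * Du f
    simp only [Du_eq_neg_single_mul_eulerOp, LaurentSeries.eulerOp_mul]
    ring

@[simp]
theorem Du.toDerivation_apply (f : LS) : Du.toDerivation f = Du f :=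
  rfl

theorem Du_zpow (f : LS) (k : ℤ) : Du (f ^ k) = k * f ^ (k - 1) * Du f := by
  simpa [zsmul_eq_mul, mul_assoc] using Du.toDerivation.leibniz_zpow f k

section SimplePole

variable {χ : LS} (hχ : χ.orderTop = -1)
include hχ

theorem ne_zero_of_orderTop_eq_neg_one : χ ≠ 0 :=
  orderTop_ne_top.1 (by simp [hχ])

theorem coeff_one_inv_mul_Du : (χ⁻¹ * Du χ).coeff 1 = 1 := by
  have hinv : ((1 : ℤ) : WithTop ℤ) ≤ χ⁻¹.orderTop := by rw [orderTop_inv, hχ]; rfl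
  have hχ' : ((-1 : ℤ) : WithTop ℤ) ≤ χ.orderTop := by rw [hχ]; rfl
  have hDu : ((0 : ℤ) : WithTop ℤ) ≤ (Du χ).orderTop := by
    simpa [hχ] using add_one_le_orderTop_Du χ
  have hDu0 : (Du χ).coeff 0 = χ.coeff (-1) := by simpa using coeff_Du_add_one χ (-1)
  calc (χ⁻¹ * Du χ).coeff (1 + 0) = χ⁻¹.coeff 1 * χ.coeff (-1) := by
        rw [coeff_mul_of_le_orderTop hinv hDu, hDu0]
    _ = (χ⁻¹ * χ).coeff (1 + -1) := (coeff_mul_of_le_orderTop hinv hχ').symm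
    _ = 1 := by simp [inv_mul_cancel₀ (ne_zero_of_orderTop_eq_neg_one hχ)]

theorem coeff_one_Du_pow_mul_zpow_neg (m : ℕ) (k : ℤ) :
    (Du (χ ^ m) * χ ^ (-k)).coeff 1 = if k = m then (m : ℂ) else 0 := by
  have hχ0 := ne_zero_of_orderTop_eq_neg_one hχ
  have hDu : Du (χ ^ m) * χ ^ (-k) = m * (χ ^ ((m : ℤ) - k - 1) * Du χ) := by
    rw [← zpow_natCast, Du_zpow, show (m : ℤ) - k - 1 = (m - 1) + -k by ring, zpow_add₀ hχ0]
    push_cast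
    ring
  split_ifs with hk
  · rw [hDu, hk, sub_self, zero_sub, zpow_neg_one, ← single_zero_natCast, coeff_single_zero_mul,
      coeff_one_inv_mul_Du hχ, mul_one]
  · have hexact :
        (((m : ℤ) - k : ℤ) : LS) * (Du (χ ^ m) * χ ^ (-k)) = m * Du (χ ^ ((m : ℤ) - k)) := by
      rw [hDu, Du_zpow]
      push_cast
      ring
    have hcoeff := congrArg (coeff · 1) hexact
    simp only [← single_zero_intCast, ← single_zero_natCast, coeff_single_zero_mul, coeff_one_Du,
      mul_zero] at hcoeff
    exact (mul_eq_zero.mp hcoeff).resolve_left (Int.cast_ne_zero.mpr (sub_ne_zero.mpr (Ne.symm hk)))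

theorem zero_le_orderTop_zpow_neg (j : ℕ) : 0 ≤ (χ ^ (-(j : ℤ))).orderTop := by
  rw [zpow_neg, zpow_natCast, ← inv_pow]
  refine (nsmul_nonneg ?_ j).trans orderTop_nsmul_le_orderTop_pow
  rw [orderTop_inv, hχ]
  decide

end SimplePole

theorem coeff_uPos (f : LS) (j : ℤ) : (uPos f).coeff j = if j ≤ 0 then f.coeff j else 0 :=
  rfl

theorem orderTop_le_orderTop_uPos (f : LS) : f.orderTop ≤ (uPos f).orderTop :=
  le_orderTop_iff_forall.mpr fun j hj => by
    rw [coeff_uPos, coeff_eq_zero_of_lt_orderTop hj, ite_self]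

theorem two_le_orderTop_sub_uPos {f : LS} (hf : f.coeff 1 = 0) : 2 ≤ (f - uPos f).orderTop :=
  le_orderTop_iff_forall.mpr fun j hj => by
    have hj : j < 2 := WithTop.coe_lt_coe.mp hj
    rw [coeff_sub, coeff_uPos]
    split_ifs with h
    · exact sub_self _
    · rw [show j = 1 by omega, hf, sub_zero]

theorem zero_le_orderTop_uPos_mul_div (L : LS) {b : LS} (hb : 0 ≤ b.orderTop) :
    0 ≤ (uPos (L * b) / L).orderTop := by
  rcases eq_or_ne L 0 with rfl | hL
  · simp
  calc (0 : WithTop ℤ) = L.orderTop + L⁻¹.orderTop := by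
        rw [← orderTop_mul, mul_inv_cancel₀ hL, orderTop_one]
    _ ≤ (L * b).orderTop + L⁻¹.orderTop := by
        gcongr
        exact (le_add_of_nonneg_right hb).trans orderTop_add_le_mul
    _ ≤ (uPos (L * b)).orderTop + L⁻¹.orderTop := by gcongr; exact orderTop_le_orderTop_uPos _
    _ ≤ (uPos (L * b) / L).orderTop := by rw [div_eq_mul_inv]; exact orderTop_add_le_mul

theorem coeff_one_uPos_mul_uPos_div {L a b : LS} (ha : 0 ≤ a.orderTop) (hb : 0 ≤ b.orderTop)
    (ha1 : (L * a).coeff 1 = 0) (hb1 : (L * b).coeff 1 = 0) :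
    (uPos (L * a) * uPos (L * b) / L).coeff 1 = (L * (a * b)).coeff 1 := by
  rcases eq_or_ne L 0 with rfl | hL
  · simp
  set Na := L * a - uPos (L * a)
  set Nb := L * b - uPos (L * b)
  have hsplit :
      uPos (L * a) * uPos (L * b) / L = L * (a * b) - (a * Nb + Na * (uPos (L * b) / L)) := by
    calc uPos (L * a) * uPos (L * b) / L = (L * a - Na) * uPos (L * b) / L := by
          rw [sub_sub_cancel]
      _ = a * (L * b - Nb) - Na * (uPos (L * b) / L) := by
          rw [sub_sub_cancel]
          field_simp
          ring
      _ = L * (a * b) - (a * Nb + Na * (uPos (L * b) / L)) := by ring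
  have herr : 2 ≤ (a * Nb + Na * (uPos (L * b) / L)).orderTop := by
    refine le_trans (le_min ?_ ?_) min_orderTop_le_orderTop_add
    · simpa using (add_le_add ha (two_le_orderTop_sub_uPos hb1)).trans orderTop_add_le_mul
    · simpa using (add_le_add (two_le_orderTop_sub_uPos ha1)
        (zero_le_orderTop_uPos_mul_div L hb)).trans orderTop_add_le_mul
  rw [hsplit, coeff_sub, coeff_eq_zero_of_lt_orderTop (lt_of_lt_of_le (by norm_num) herr), sub_zero]

theorem stmt10_general (m n : ℕ) (c : ℤ → ℂ)
    (χ : LS) (hχ1 : χ.coeff (-1) = 1) (hχ2 : ∀ j : ℤ, j < -1 → χ.coeff j = 0)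
    (hroot : χ ^ m = ellInv m n c) :
    ∀ j₁ j₂ : ℕ, 1 ≤ j₁ → j₁ ≤ m - 1 → 1 ≤ j₂ → j₂ ≤ m - 1 →
      -resInf (uPos (Du (ellInv m n c) * χ ^ (-(j₁ : ℤ))) *
          uPos (Du (ellInv m n c) * χ ^ (-(j₂ : ℤ))) / Du (ellInv m n c))
        = (m : ℂ) * (if j₁ + j₂ = m then 1 else 0) := by
  intro j₁ j₂ hj₁ hj₁m hj₂ hj₂m
  have hχ : χ.orderTop = -1 := le_antisymm (orderTop_le_of_coeff_ne_zero (by simp [hχ1]))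
    (le_orderTop_iff_forall.mpr fun j hj => hχ2 j (WithTop.coe_lt_coe.mp hj))
  have hres := coeff_one_Du_pow_mul_zpow_neg hχ m
  rw [← hroot, resInf, neg_neg,
    coeff_one_uPos_mul_uPos_div (zero_le_orderTop_zpow_neg hχ j₁) (zero_le_orderTop_zpow_neg hχ j₂)
      ((hres j₁).trans (if_neg (by omega))) ((hres j₂).trans (if_neg (by omega))),
    ← zpow_add₀ (ne_zero_of_orderTop_eq_neg_one hχ), ← neg_add, ← Nat.cast_add, hres]
  simp only [Nat.cast_inj, mul_ite, mul_one, mul_zero]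

/-- For `ℓ = uᵐ + Σ_{i=−n}^{m−1} cᵢuⁱ` with `c₋ₙ ≠ 0` and `χ` the
unique series in `ℂ((u⁻¹))` with leading term `u` and `χᵐ = ℓ`, for all
`1 ≤ j₁, j₂ ≤ m−1`:  `−res_∞ [(ℓ′χ^{−j₁})₊ (ℓ′χ^{−j₂})₊ / ℓ′] dz = m·δ_{m,j₁+j₂}`. -/
theorem stmt10 (m n : ℕ) (hm : 1 ≤ m) (hn : 1 ≤ n) (c : ℤ → ℂ)
    (hc : c (-(n : ℤ)) ≠ 0)
    (χ : LS) (hχ1 : χ.coeff (-1) = 1) (hχ2 : ∀ j : ℤ, j < -1 → χ.coeff j = 0)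
    (hroot : χ ^ m = ellInv m n c) :
    ∀ j₁ j₂ : ℕ, 1 ≤ j₁ → j₁ ≤ m - 1 → 1 ≤ j₂ → j₂ ≤ m - 1 →
      -resInf (uPos (Du (ellInv m n c) * χ ^ (-(j₁ : ℤ))) *
          uPos (Du (ellInv m n c) * χ ^ (-(j₂ : ℤ))) / Du (ellInv m n c))
        = (m : ℂ) * (if j₁ + j₂ = m then 1 else 0) :=
  stmt10_general m n c χ hχ1 hχ2 hroot
end
end

section
/- Let ρ > 0, let U ⊆ ℂ be an open set containing the circle C = {z : |z| = ρ}, let T ⊆ ℂ be open, and let ζ : T × U → ℂ be holomorphic in (t, z) and nowhere vanishing, satisfying ∂ζ/∂t = −ζᵏ · ∂ζ/∂z on T × U for a fixed integer k. Then for every integer j: (i) pointwise, ∂/∂t (∂_z ζ · ζʲ) = −∂/∂z (∂_z ζ · ζ^{j+k}); and (ii) for every t ∈ T, d/dt [ (1/(2πi)) ∮_C ∂_z ζ(t,z) · ζ(t,z)ʲ · z^{−1} dz ] = −(1/(2πi)) ∮_C ∂_z ( ∂_z ζ(t,z) · ζ(t,z)^{j+k} ) · z^{−1} dz; in particular this t-derivative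 depends on (j, k) only through the sum j + k. -/
/-!
Part (i) is the symmetry of mixed partials, `∂_t (ζ_z ζ^j) = ∂_z (ζ_t ζ^j)` (both equal
`ζ_{tz} ζ^j + j ζ^{j-1} ζ_t ζ_z`), combined with the evolution equation, which turns `ζ_t ζ^j`
into `-ζ_z ζ^{j+k}`. The mixed partials `ζ_{tz} = ζ_{zt}` agree because Cauchy's formula
`ζ_z(t, z) = (2πi)⁻¹ ∮ ζ(t, w) / (w - z)² dw` may be differentiated under the integral sign.
Part (ii) then follows from (i) by differentiating under the circle integral; the domination
comes from Cauchy estimates on a compact neighbourhood of `{t} × C`.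
-/

open Complex Metric Set Filter Topology

theorem norm_deriv_le_of_forall_mem_closedBall_norm_le {f : ℂ → ℂ} {c z : ℂ} {r δ M : ℝ}
    (hδ : 0 < δ) (hf : DifferentiableOn ℂ f (closedBall c r)) (hM : ∀ w ∈ closedBall c r, ‖f w‖ ≤ M)
    (hz : z ∈ closedBall c (r - δ)) : ‖deriv f z‖ ≤ M / δ := by
  have hsub : closedBall z δ ⊆ closedBall c r := closedBall_subset_closedBall' <| by
    linarith [mem_closedBall.1 hz]
  exact Complex.norm_deriv_le_of_forall_mem_sphere_norm_le hδ
    ((hf.mono (closure_ball_subset_closedBall.trans hsub)).diffContOnCl)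
    fun w hw => hM w (hsub (sphere_subset_closedBall hw))

theorem hasDerivAt_circleIntegral_of_differentiableOn_of_norm_le {F : ℂ → ℂ → ℂ} {F' : ℂ → ℂ}
    {c t : ℂ} {R ε M : ℝ} (hε : 0 < ε)
    (hcont : ∀ s ∈ closedBall t ε, ContinuousOn (F s) (sphere c |R|))
    (hdiff : ∀ w ∈ sphere c |R|, DifferentiableOn ℂ (F · w) (closedBall t ε))
    (hM : ∀ s ∈ closedBall t ε, ∀ w ∈ sphere c |R|, ‖F s w‖ ≤ M)
    (hF' : ∀ w ∈ sphere c |R|, HasDerivAt (F · w) (F' w) t)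
    (hcont' : ContinuousOn F' (sphere c |R|)) :
    HasDerivAt (fun s => ∮ w in C(c, R), F s w) (∮ w in C(c, R), F' w) t := by
  have hcirc : ∀ {G : ℂ → ℂ}, ContinuousOn G (sphere c |R|) →
      Continuous fun θ => deriv (circleMap c R) θ • G (circleMap c R θ) := fun hG =>
    (continuous_circleMap 0 R |>.mul continuous_const).congr
      (fun θ => (deriv_circleMap c R θ).symm)
      |>.smul (hG.comp_continuous (continuous_circleMap c R) (circleMap_mem_sphere' c R))
  have hF't : ∀ θ, deriv (fun s => F s (circleMap c R θ)) t = F' (circleMap c R θ) := fun θ =>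
    (hF' _ (circleMap_mem_sphere' c R θ)).deriv
  have := (intervalIntegral.hasDerivAt_integral_of_dominated_loc_of_deriv_le
    (μ := MeasureTheory.volume) (a := 0) (b := 2 * Real.pi)
    (F := fun s θ => deriv (circleMap c R) θ • F s (circleMap c R θ))
    (F' := fun s θ => deriv (circleMap c R) θ • deriv (F · (circleMap c R θ)) s)
    (bound := fun _ => |R| * (M / (ε / 2))) (ball_mem_nhds t (half_pos hε)) ?_
    ((hcirc (hcont t (mem_closedBall_self hε.le))).intervalIntegrable _ _)
    (by simpa only [hF't] using (hcirc hcont').aestronglyMeasurable) ?_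
    intervalIntegrable_const ?_).2
  · simpa only [hF't, circleIntegral] using this
  · filter_upwards [ball_mem_nhds t hε] with s hs
    exact (hcirc (hcont s (ball_subset_closedBall hs))).aestronglyMeasurable
  · refine .of_forall fun θ _ s hs => ?_
    rw [norm_smul, deriv_circleMap, norm_mul, norm_I, mul_one, norm_circleMap_zero]
    gcongr
    exact norm_deriv_le_of_forall_mem_closedBall_norm_le (half_pos hε)
      (hdiff _ (circleMap_mem_sphere' c R θ)) (fun s hs => hM s hs _ (circleMap_mem_sphere' c R θ))
      (ball_subset_closedBall (mem_ball.2 (by linarith [mem_ball.1 hs])))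
  · exact .of_forall fun θ _ s hs => (((hdiff _ (circleMap_mem_sphere' c R θ)).differentiableAt
      (closedBall_mem_nhds_of_mem (ball_subset_ball (by linarith) hs))).hasDerivAt).const_smul
        (deriv (circleMap c R) θ)

section

variable {T U : Set ℂ} {ζ : ℂ → ℂ → ℂ}

theorem DifferentiableOn.of_prod_right
    (hζ : DifferentiableOn ℂ (fun p : ℂ × ℂ => ζ p.1 p.2) (T ×ˢ U)) {t : ℂ} (ht : t ∈ T) :
    DifferentiableOn ℂ (ζ t) U := fun z hz =>
  (hζ (t, z) ⟨ht, hz⟩).comp z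
    ((differentiableWithinAt_const t).prodMk differentiableWithinAt_id) fun _ hw => ⟨ht, hw⟩

theorem DifferentiableOn.of_prod_left
    (hζ : DifferentiableOn ℂ (fun p : ℂ × ℂ => ζ p.1 p.2) (T ×ˢ U)) {z : ℂ} (hz : z ∈ U) :
    DifferentiableOn ℂ (fun s => ζ s z) T := fun t ht =>
  (hζ (t, z) ⟨ht, hz⟩).comp t
    (differentiableWithinAt_id.prodMk (differentiableWithinAt_const z))
    fun _ hs => mk_mem_prod hs hz

theorem hasDerivAt_deriv_of_differentiableOn_prod (hT : IsOpen T) (hU : IsOpen U)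
    (hζ : DifferentiableOn ℂ (fun p : ℂ × ℂ => ζ p.1 p.2) (T ×ˢ U)) {t z : ℂ} (ht : t ∈ T)
    (hz : z ∈ U) (hζt : DifferentiableOn ℂ (fun w => deriv (fun s => ζ s w) t) U) :
    HasDerivAt (fun s => deriv (ζ s) z) (deriv (fun w => deriv (fun s => ζ s w) t) z) t := by
  obtain ⟨ε, hε, hTε⟩ := nhds_basis_closedBall.mem_iff.1 (hT.mem_nhds ht)
  obtain ⟨r, hr, hUr⟩ := nhds_basis_closedBall.mem_iff.1 (hU.mem_nhds hz)
  have hcauchy : ∀ {f : ℂ → ℂ}, DifferentiableOn ℂ f U →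
      deriv f z = (2 * Real.pi * I)⁻¹ • ∮ w in C(z, r), (1 / (w - z) ^ 2) • f w := fun hf => by
    rw [(hf.mono hUr).deriv_eq_smul_circleIntegral hr, inv_smul_smul₀ two_pi_I_ne_zero]
  have hkernel : ContinuousOn (fun w : ℂ => 1 / (w - z) ^ 2) (sphere z |r|) :=
    continuousOn_const.div (by fun_prop) fun w hw =>
      pow_ne_zero 2 (sub_ne_zero.2 (ne_of_mem_sphere hw (abs_ne_zero.2 hr.ne')))
  have hUsph : sphere z |r| ⊆ U := by
    rw [abs_of_pos hr]
    exact sphere_subset_closedBall.trans hUr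
  obtain ⟨M, hM⟩ := ((isCompact_closedBall t ε).prod (isCompact_sphere z |r|))
    |>.exists_bound_of_continuousOn ((hkernel.comp continuousOn_snd fun p hp => hp.2).smul
      (hζ.continuousOn.mono (prod_mono hTε hUsph)))
  have hint := hasDerivAt_circleIntegral_of_differentiableOn_of_norm_le
    (F := fun s w => (1 / (w - z) ^ 2) • ζ s w) (c := z) (R := r) hε
    (fun s hs => hkernel.smul ((hζ.of_prod_right (hTε hs)).continuousOn.mono hUsph))
    (fun w hw => by
      exact ((hζ.of_prod_left (hUsph hw)).mono hTε).const_smul (1 / (w - z) ^ 2))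
    (fun s hs w hw => hM (s, w) ⟨hs, hw⟩)
    (fun w hw => ((hζ.of_prod_left (hUsph hw)).differentiableAt
      (hT.mem_nhds ht)).hasDerivAt.const_smul (1 / (w - z) ^ 2))
    (hkernel.smul (hζt.continuousOn.mono hUsph))
  refine hcauchy hζt ▸ (hint.const_smul (2 * Real.pi * I)⁻¹).congr_of_eventuallyEq ?_
  filter_upwards [isOpen_ball.mem_nhds (mem_ball_self hε)] with s hs
  exact hcauchy (hζ.of_prod_right (hTε (ball_subset_closedBall hs)))

theorem differentiableOn_deriv_mul_zpow {f : ℂ → ℂ} (hU : IsOpen U)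
    (hf : DifferentiableOn ℂ f U) (hne : ∀ z ∈ U, f z ≠ 0) (m : ℤ) :
    DifferentiableOn ℂ (fun w => deriv f w * f w ^ m) U :=
  (hf.deriv hU).mul (hf.zpow (Or.inl hne))

theorem hasDerivAt_deriv_mul_zpow (hT : IsOpen T) (hU : IsOpen U)
    (hζ : DifferentiableOn ℂ (fun p : ℂ × ℂ => ζ p.1 p.2) (T ×ˢ U)) {t z : ℂ} (ht : t ∈ T)
    (hz : z ∈ U) (hζt : DifferentiableOn ℂ (fun w => deriv (fun s => ζ s w) t) U)
    (hne : ζ t z ≠ 0) (j : ℤ) :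
    HasDerivAt (fun s => deriv (ζ s) z * ζ s z ^ j)
      (deriv (fun w => deriv (fun s => ζ s w) t * ζ t w ^ j) z) t := by
  have hζz :
      HasDerivAt (fun s => ζ s z ^ j) (j * ζ t z ^ (j - 1) * deriv (fun s => ζ s z) t) t := by
    exact (hasDerivAt_zpow j _ (Or.inl hne)).comp t
      ((hζ.of_prod_left hz).differentiableAt (hT.mem_nhds ht)).hasDerivAt
  have hζs : HasDerivAt (fun w => ζ t w ^ j) (j * ζ t z ^ (j - 1) * deriv (ζ t) z) z := by
    exact (hasDerivAt_zpow j _ (Or.inl hne)).comp z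
      ((hζ.of_prod_right ht).differentiableAt (hU.mem_nhds hz)).hasDerivAt
  rw [((hζt.differentiableAt (hU.mem_nhds hz)).hasDerivAt.fun_mul hζs).deriv]
  exact ((hasDerivAt_deriv_of_differentiableOn_prod hT hU hζ ht hz hζt).mul hζz).congr_deriv
    (by ring)

theorem exists_norm_deriv_le_of_differentiableOn_prod {S K : Set ℂ} (hU : IsOpen U)
    (hζ : DifferentiableOn ℂ (fun p : ℂ × ℂ => ζ p.1 p.2) (T ×ˢ U)) (hS : IsCompact S)
    (hK : IsCompact K) (hST : S ⊆ T) (hKU : K ⊆ U) :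
    ∃ M, ∀ s ∈ S, ∀ w ∈ K, ‖deriv (ζ s) w‖ ≤ M := by
  obtain ⟨r, hr, hrU⟩ := hK.exists_cthickening_subset_open hU hKU
  obtain ⟨M, hM⟩ := (hS.prod hK.cthickening).exists_bound_of_continuousOn
    (hζ.continuousOn.mono (prod_mono hST hrU))
  refine ⟨M / r, fun s hs w hw => norm_deriv_le_of_forall_mem_closedBall_norm_le hr
    ((hζ.of_prod_right (hST hs)).mono ((closedBall_subset_cthickening hw r).trans hrU))
    (fun x hx => hM (s, x) ⟨hs, closedBall_subset_cthickening hw r hx⟩) ?_⟩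
  simp

variable {k : ℤ}

theorem hasDerivAt_deriv_mul_zpow_of_evolution (hT : IsOpen T) (hU : IsOpen U)
    (hζ : DifferentiableOn ℂ (fun p : ℂ × ℂ => ζ p.1 p.2) (T ×ˢ U))
    (hne : ∀ t ∈ T, ∀ z ∈ U, ζ t z ≠ 0)
    (hev : ∀ t ∈ T, ∀ z ∈ U, deriv (fun s => ζ s z) t = -(ζ t z ^ k * deriv (ζ t) z))
    {t z : ℂ} (ht : t ∈ T) (hz : z ∈ U) (j : ℤ) :
    HasDerivAt (fun s => deriv (ζ s) z * ζ s z ^ j)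
      (-deriv (fun w => deriv (ζ t) w * ζ t w ^ (j + k)) z) t := by
  have hflux : (fun w => deriv (fun s => ζ s w) t * ζ t w ^ j)
      =ᶠ[𝓝 z] fun w => -(deriv (ζ t) w * ζ t w ^ (j + k)) := by
    filter_upwards [hU.mem_nhds hz] with w hw
    rw [hev t ht w hw, zpow_add₀ (hne t ht w hw)]
    ring
  have := hasDerivAt_deriv_mul_zpow hT hU hζ ht hz
    (((differentiableOn_deriv_mul_zpow hU (hζ.of_prod_right ht) (hne t ht) k).neg).congr
      fun w hw => (hev t ht w hw).trans (by simp [mul_comm]))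
    (hne t ht z hz) j
  rwa [hflux.deriv_eq, deriv.fun_neg] at this

theorem hasDerivAt_circleIntegral_deriv_mul_zpow_of_evolution (hT : IsOpen T) (hU : IsOpen U)
    (hζ : DifferentiableOn ℂ (fun p : ℂ × ℂ => ζ p.1 p.2) (T ×ˢ U))
    (hne : ∀ t ∈ T, ∀ z ∈ U, ζ t z ≠ 0)
    (hev : ∀ t ∈ T, ∀ z ∈ U, deriv (fun s => ζ s z) t = -(ζ t z ^ k * deriv (ζ t) z))
    {c : ℂ} {R : ℝ} (hsub : sphere c |R| ⊆ U) {φ : ℂ → ℂ} (hφ : ContinuousOn φ (sphere c |R|))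
    (j : ℤ) {t : ℂ} (ht : t ∈ T) :
    HasDerivAt (fun s => ∮ z in C(c, R), deriv (ζ s) z * ζ s z ^ j * φ z)
      (-∮ z in C(c, R), deriv (fun w => deriv (ζ t) w * ζ t w ^ (j + k)) z * φ z) t := by
  obtain ⟨ε, hε, hTε⟩ := nhds_basis_closedBall.mem_iff.1 (hT.mem_nhds ht)
  have hK : IsCompact (closedBall t ε ×ˢ sphere c |R|) :=
    (isCompact_closedBall t ε).prod (isCompact_sphere c |R|)
  obtain ⟨M₁, hM₁⟩ := exists_norm_deriv_le_of_differentiableOn_prod hU hζ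
    (isCompact_closedBall t ε) (isCompact_sphere c |R|) hTε hsub
  obtain ⟨M₂, hM₂⟩ := hK.exists_bound_of_continuousOn
    ((hζ.continuousOn.mono (prod_mono hTε hsub)).zpow₀ j
      fun p hp => Or.inl (hne p.1 (hTε hp.1) p.2 (hsub hp.2)))
  obtain ⟨M₃, hM₃⟩ := (isCompact_sphere c |R|).exists_bound_of_continuousOn hφ
  have hint := hasDerivAt_circleIntegral_of_differentiableOn_of_norm_le
    (F := fun s z => deriv (ζ s) z * ζ s z ^ j * φ z) (M := M₁ * M₂ * M₃) hε
    (fun s hs => ((differentiableOn_deriv_mul_zpow hU (hζ.of_prod_right (hTε hs))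
      (hne s (hTε hs)) j).continuousOn.mono hsub).mul hφ)
    (fun w hw s hs => (hasDerivAt_deriv_mul_zpow_of_evolution hT hU hζ hne hev (hTε hs)
      (hsub hw) j).differentiableAt.differentiableWithinAt.mul_const (φ w))
    (fun s hs w hw => by
      have h₁ := hM₁ s hs w hw
      have h₂ := hM₂ (s, w) ⟨hs, hw⟩
      have h₃ := hM₃ w hw
      have h₁₂ := mul_le_mul h₁ h₂ (norm_nonneg _) ((norm_nonneg _).trans h₁)
      rw [norm_mul, norm_mul]
      exact mul_le_mul h₁₂ h₃ (norm_nonneg _)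
        ((mul_nonneg (norm_nonneg _) (norm_nonneg _)).trans h₁₂))
    (fun w hw => (hasDerivAt_deriv_mul_zpow_of_evolution hT hU hζ hne hev ht (hsub hw)
      j).mul_const (φ w))
    ((((differentiableOn_deriv_mul_zpow hU (hζ.of_prod_right ht) (hne t ht)
      (j + k)).deriv hU).continuousOn.mono hsub).neg.mul hφ)
  refine hint.congr_deriv ?_
  simp only [circleIntegral, neg_mul, smul_neg, intervalIntegral.integral_neg]

end

/-- Let `ζ(t,z)` be holomorphic in `(t,z)` and nowhere vanishing on
`T × U`, where `U` is an open set containing the circle `{|z| = ρ}` and `T` is open,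
and suppose `∂ζ/∂t = −ζ^k ∂ζ/∂z` on `T × U`. Then for every integer `j`:
(i) pointwise `∂/∂t (∂_z ζ · ζ^j) = −∂/∂z (∂_z ζ · ζ^{j+k})`, and
(ii) for every `t ∈ T`,
`d/dt [(1/(2πi)) ∮ ∂_z ζ · ζ^j · z⁻¹ dz] = −(1/(2πi)) ∮ ∂_z(∂_z ζ · ζ^{j+k}) · z⁻¹ dz`;
in particular this `t`-derivative depends on `(j,k)` only through `j + k`. -/
theorem stmt14 (ρ : ℝ) (hρ : 0 < ρ) (U : Set ℂ) (hU : IsOpen U)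
    (hsub : Metric.sphere (0 : ℂ) ρ ⊆ U) (T : Set ℂ) (hT : IsOpen T)
    (ζ : ℂ → ℂ → ℂ)
    (hζ : DifferentiableOn ℂ (fun p : ℂ × ℂ => ζ p.1 p.2) (T ×ˢ U))
    (hne : ∀ t ∈ T, ∀ z ∈ U, ζ t z ≠ 0)
    (k : ℤ)
    (hev : ∀ t ∈ T, ∀ z ∈ U, deriv (fun s => ζ s z) t = -(ζ t z ^ k * deriv (ζ t) z)) :
    ∀ j : ℤ,
      (∀ t ∈ T, ∀ z ∈ U,
        deriv (fun s => deriv (ζ s) z * ζ s z ^ j) t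
          = -(deriv (fun w => deriv (ζ t) w * ζ t w ^ (j + k)) z)) ∧
      (∀ t ∈ T, HasDerivAt
        (fun s => (2 * Real.pi * Complex.I)⁻¹ *
          ∮ z in C(0, ρ), deriv (ζ s) z * ζ s z ^ j * z⁻¹)
        (-((2 * Real.pi * Complex.I)⁻¹ *
          ∮ z in C(0, ρ), deriv (fun w => deriv (ζ t) w * ζ t w ^ (j + k)) z * z⁻¹)) t) := by
  intro j
  refine ⟨fun t ht z hz =>
    (hasDerivAt_deriv_mul_zpow_of_evolution hT hU hζ hne hev ht hz j).deriv, fun t ht => ?_⟩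
  rw [← abs_of_pos hρ] at hsub
  have hinv : ContinuousOn (·⁻¹) (sphere (0 : ℂ) |ρ|) := continuousOn_inv₀.mono fun w hw =>
    ne_of_mem_sphere hw (abs_ne_zero.2 hρ.ne')
  rw [← mul_neg]
  exact (hasDerivAt_circleIntegral_deriv_mul_zpow_of_evolution hT hU hζ hne hev hsub hinv j
    ht).const_mul _
end

section
/- Fix integers m, n ≥ 1 and let ℓ ∈ ℂ[u, u⁻¹] be a Laurent polynomial of the form ℓ = uᵐ + Σ_{i=−n}^{m−1} cᵢuⁱ with c₋ₙ ≠ 0, let χ ∈ ℂ((u⁻¹)) be the unique series with leading term u such that χᵐ = ℓ, and set R_j := ℓ′χ^{−j} ∈ ℂ((u⁻¹)) for integers j ≥ 1. Then for all 1 ≤ j₁, j₂, j₃ ≤ m−1: res_∞ [ (R_{j₁})₊ · (R_{j₂})₊ · (R_{j₃})₊ / ℓ′ ] dz = res_∞ [ R_{j₁+j₂}·(R_{j₃})₊ − (R_{j₁+j₃})₊·R_{j₂} − (R_{j₂+j₃})₊·R_{j₁} ] dz. -/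
noncomputable section

open HahnSeries

/-! Write `R_j = ℓ′ a_j` with `a_j = χ^{-j} ∈ ℂ[[u⁻¹]]` and split `R = R₊ + R₋`. A field identity
eliminating the `R₊` turns the difference of the two sides into a sum of products that are either
products of two `₊`-parts, hence polynomials in `u`, or lie in `u⁻²ℂ[[u⁻¹]]`: they contain two
`₋`-parts and otherwise factors in `ℂ[[u⁻¹]]`, except for `N₁N₂N₃/ℓ′`, where the third `₋`-part
compensates the (at most one) power of `u` in `1/ℓ′`. None of them has a `u⁻¹` term. -/

theorem triple_splitting_identity {F : Type*} [Field F]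
    {e a b d P₁ P₂ P₃ P₁₃ P₂₃ N₁ N₂ N₃ N₁₃ N₂₃ : F} (he : e ≠ 0)
    (h₁ : P₁ + N₁ = e * a) (h₂ : P₂ + N₂ = e * b) (h₃ : P₃ + N₃ = e * d)
    (h₁₃ : P₁₃ + N₁₃ = e * (a * d)) (h₂₃ : P₂₃ + N₂₃ = e * (b * d)) :
    P₁ * P₂ * P₃ / e - (e * (a * b) * P₃ - P₁₃ * (e * b) - P₂₃ * (e * a))
      = (P₁₃ * P₂ - N₁₃ * N₂) + (P₂₃ * P₁ - N₂₃ * N₁)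
        + a * (N₂ * N₃) + b * (N₁ * N₃) + d * (N₁ * N₂) - N₁ * N₂ * N₃ / e := by
  obtain rfl := eq_sub_of_add_eq' h₁
  obtain rfl := eq_sub_of_add_eq' h₂
  obtain rfl := eq_sub_of_add_eq' h₃
  obtain rfl := eq_sub_of_add_eq' h₁₃
  obtain rfl := eq_sub_of_add_eq' h₂₃
  field_simp
  ring

namespace LS

theorem coeff_Dt (f : LS) (i : ℤ) : (Dt f).coeff i = ((i + 1 : ℤ) : ℂ) * f.coeff (i + 1) := by
  rw [Dt, LaurentSeries.derivative_apply, LaurentSeries.hasseDeriv_coeff, Ring.choose_one_right,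
    zsmul_eq_mul]
  push_cast
  ring

theorem coeff_Du (f : LS) (j : ℤ) : (Du f).coeff j = -(((j - 1 : ℤ) : ℂ) * f.coeff (j - 1)) := by
  rw [Du, coeff_neg, show j = j - 2 + 2 by ring, coeff_single_mul_add, one_mul, coeff_Dt]
  ring_nf

theorem coeff_ellInv_neg (m n : ℕ) (c : ℤ → ℂ) : (ellInv m n c).coeff (-(m : ℤ)) = 1 := by
  rw [ellInv, coeff_add, coeff_single_same, coeff_sum,
    Finset.sum_eq_zero fun i hi => coeff_single_of_ne (by simp at hi; omega), add_zero]

theorem orderTop_Du_ellInv_le {m : ℕ} (hm : 1 ≤ m) (n : ℕ) (c : ℤ → ℂ) :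
    (Du (ellInv m n c)).orderTop ≤ 1 := by
  have hcoeff : (Du (ellInv m n c)).coeff (1 - m) ≠ 0 := by
    rw [coeff_Du, sub_sub_cancel_left, coeff_ellInv_neg, mul_one, Int.cast_neg, neg_neg]
    exact_mod_cast (by omega : m ≠ 0)
  exact (orderTop_le_of_coeff_ne_zero hcoeff).trans
    (by exact_mod_cast (by omega : 1 - (m : ℤ) ≤ 1))

theorem orderTop_inv (x : LS) : x⁻¹.orderTop = -x.orderTop := by
  simpa only [addVal_apply] using (addVal ℤ ℂ).map_inv (x := x)

theorem neg_le_orderTop_inv {x : LS} {k : ℤ} (hx : x.orderTop ≤ k) :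
    ((-k : ℤ) : WithTop ℤ) ≤ x⁻¹.orderTop := by
  obtain ⟨a, ha⟩ := WithTop.ne_top_iff_exists.1 (ne_top_of_le_ne_top WithTop.coe_ne_top hx)
  rw [← ha] at hx
  rw [orderTop_inv, ← ha]
  exact_mod_cast neg_le_neg (WithTop.coe_le_coe.1 hx)

theorem orderTop_zpow_neg_nonneg {x : LS} (hx : x.orderTop ≤ 0) (j : ℕ) :
    0 ≤ (x ^ (-(j : ℤ))).orderTop := by
  rw [zpow_neg, zpow_natCast, ← inv_pow]
  exact (nsmul_nonneg (by simpa using neg_le_orderTop_inv (k := 0) hx) j).trans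
    orderTop_nsmul_le_orderTop_pow

theorem coeff_uPos (f : LS) (i : ℤ) : (uPos f).coeff i = if i ≤ 0 then f.coeff i else 0 := rfl

theorem one_le_orderTop_sub_uPos (f : LS) : 1 ≤ (f - uPos f).orderTop :=
  le_orderTop_iff_forall.2 fun i hi => by
    rw [coeff_sub, coeff_uPos, if_pos (by norm_cast at hi; omega), sub_self]

theorem coeff_uPos_mul_uPos (f g : LS) {k : ℤ} (hk : 0 < k) : (uPos f * uPos g).coeff k = 0 := by
  rw [coeff_mul]
  refine Finset.sum_eq_zero fun ij hij => ?_
  obtain ⟨-, -, hsum⟩ := Finset.mem_antidiagonal.1 hij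
  simp only [coeff_uPos]
  split_ifs <;> first | omega | simp

theorem le_orderTop_mul {x y : LS} {a b : ℤ} (hx : (a : WithTop ℤ) ≤ x.orderTop)
    (hy : (b : WithTop ℤ) ≤ y.orderTop) : ((a + b : ℤ) : WithTop ℤ) ≤ (x * y).orderTop := by
  rw [WithTop.coe_add]
  exact (add_le_add hx hy).trans orderTop_add_le_mul

theorem resInf_uPos_mul_uPos_mul_uPos_div {L a b d : LS} (hL : L.orderTop ≤ 1)
    (ha : 0 ≤ a.orderTop) (hb : 0 ≤ b.orderTop) (hd : 0 ≤ d.orderTop) :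
    resInf (uPos (L * a) * uPos (L * b) * uPos (L * d) / L)
      = resInf (L * (a * b) * uPos (L * d) - uPos (L * (a * d)) * (L * b)
          - uPos (L * (b * d)) * (L * a)) := by
  have hL0 : L ≠ 0 := by rintro rfl; simp at hL
  have hres {x : LS} {k : ℤ} (hx : (k : WithTop ℤ) ≤ x.orderTop) (hk : 1 < k) : x.coeff 1 = 0 :=
    coeff_eq_zero_of_lt_orderTop ((WithTop.coe_lt_coe.2 hk).trans_le hx)
  have hN (f : LS) : ((1 : ℤ) : WithTop ℤ) ≤ (f - uPos f).orderTop := one_le_orderTop_sub_uPos f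
  have hNN (f g : LS) : ((f - uPos f) * (g - uPos g)).coeff 1 = 0 :=
    hres (le_orderTop_mul (hN f) (hN g)) (by norm_num)
  have hxNN {x : LS} (hx : 0 ≤ x.orderTop) (f g : LS) :
      (x * ((f - uPos f) * (g - uPos g))).coeff 1 = 0 :=
    hres (le_orderTop_mul (a := 0) hx (le_orderTop_mul (hN f) (hN g))) (by norm_num)
  have hNNN (f g h : LS) : ((f - uPos f) * (g - uPos g) * (h - uPos h) * L⁻¹).coeff 1 = 0 :=
    hres (le_orderTop_mul (le_orderTop_mul (le_orderTop_mul (hN f) (hN g)) (hN h))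
      (neg_le_orderTop_inv hL)) (by norm_num)
  rw [resInf, resInf, neg_inj, ← sub_eq_zero, ← coeff_sub,
    triple_splitting_identity (d := d) hL0 (add_sub_cancel _ _) (add_sub_cancel _ _)
      (add_sub_cancel _ _) (add_sub_cancel _ _) (add_sub_cancel _ _), div_eq_mul_inv]
  simp only [coeff_add, coeff_sub, coeff_uPos_mul_uPos _ _ one_pos, hNN, hxNN ha, hxNN hb,
    hxNN hd, hNNN]
  norm_num

end LS

theorem stmt19_general (m n : ℕ) (hm : 1 ≤ m) (c : ℤ → ℂ)
    (χ : LS) (hχ1 : χ.coeff (-1) = 1)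
    (R : ℕ → LS) (hR : ∀ j : ℕ, 1 ≤ j → R j = Du (ellInv m n c) * χ ^ (-(j : ℤ))) :
    ∀ j₁ j₂ j₃ : ℕ, 1 ≤ j₁ → j₁ ≤ m - 1 → 1 ≤ j₂ → j₂ ≤ m - 1 → 1 ≤ j₃ → j₃ ≤ m - 1 →
      resInf (uPos (R j₁) * uPos (R j₂) * uPos (R j₃) / Du (ellInv m n c))
        = resInf (R (j₁ + j₂) * uPos (R j₃)
            - uPos (R (j₁ + j₃)) * R j₂ - uPos (R (j₂ + j₃)) * R j₁) := by
  intro j₁ j₂ j₃ h₁ _ h₂ _ h₃ _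
  have hχ : χ.orderTop ≤ 0 := (orderTop_le_of_coeff_ne_zero (g := -1) (by simp [hχ1])).trans
    (by exact_mod_cast neg_one_lt_zero.le)
  have hχ0 : χ ≠ 0 := by rintro rfl; simp at hχ
  have hR_add (i k : ℕ) (hi : 1 ≤ i) :
      R (i + k) = Du (ellInv m n c) * (χ ^ (-(i : ℤ)) * χ ^ (-(k : ℤ))) := by
    rw [hR _ (by omega), ← zpow_add₀ hχ0]
    push_cast
    ring_nf
  rw [hR_add _ _ h₁, hR_add _ _ h₁, hR_add _ _ h₂, hR _ h₁, hR _ h₂, hR _ h₃]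
  exact LS.resInf_uPos_mul_uPos_mul_uPos_div (LS.orderTop_Du_ellInv_le hm n c)
    (LS.orderTop_zpow_neg_nonneg hχ j₁) (LS.orderTop_zpow_neg_nonneg hχ j₂)
    (LS.orderTop_zpow_neg_nonneg hχ j₃)

/-- With `ℓ = uᵐ + Σ_{i=−n}^{m−1} cᵢuⁱ`, `c₋ₙ ≠ 0`, `χ ∈ ℂ((u⁻¹))` the
unique series with leading term `u` and `χᵐ = ℓ`, and `R_j := ℓ′χ^{−j}`, for all
`1 ≤ j₁, j₂, j₃ ≤ m−1`:
`res_∞ [(R_{j₁})₊(R_{j₂})₊(R_{j₃})₊/ℓ′] dz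
  = res_∞ [R_{j₁+j₂}(R_{j₃})₊ − (R_{j₁+j₃})₊R_{j₂} − (R_{j₂+j₃})₊R_{j₁}] dz`. -/
theorem stmt19 (m n : ℕ) (hm : 1 ≤ m) (hn : 1 ≤ n) (c : ℤ → ℂ)
    (hc : c (-(n : ℤ)) ≠ 0)
    (χ : LS) (hχ1 : χ.coeff (-1) = 1) (hχ2 : ∀ j : ℤ, j < -1 → χ.coeff j = 0)
    (hroot : χ ^ m = ellInv m n c)
    (R : ℕ → LS) (hR : ∀ j : ℕ, 1 ≤ j → R j = Du (ellInv m n c) * χ ^ (-(j : ℤ))) :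
    ∀ j₁ j₂ j₃ : ℕ, 1 ≤ j₁ → j₁ ≤ m - 1 → 1 ≤ j₂ → j₂ ≤ m - 1 → 1 ≤ j₃ → j₃ ≤ m - 1 →
      resInf (uPos (R j₁) * uPos (R j₂) * uPos (R j₃) / Du (ellInv m n c))
        = resInf (R (j₁ + j₂) * uPos (R j₃)
            - uPos (R (j₁ + j₃)) * R j₂ - uPos (R (j₂ + j₃)) * R j₁) :=
  stmt19_general m n hm c χ hχ1 R hR
end
end
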